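/- arXiv:1507.07194 — 2 statements merged into one kernel-verified Lean document; each statement's English description precedes it below -/
import Mathlib

section
/- For a connected finite simple graph G, equality Σ_{v} 1/(ζ(v)+1) = Σ_{v} 1/(deg_G(v)+1) holds if and only if G is regular. -/
open SimpleGraph Finset

/-- The minimum degree of a subgraph `H` of `G`: the infimum over vertices of `H`
of the number of neighbors in `H`. -/
noncomputable def subMinDeg {V : Type*} (G : SimpleGraph V) (H : G.Subgraph) : ℕ :=
  sInf ((fun v => (H.neighborSet v).ncard) '' H.verts)

/-- The degenerate degree `ζ(v)`: the maximum of `δ(H)` over all subgraphs `H` of `G`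
containing `v`. -/
noncomputable def zeta {V : Type*} (G : SimpleGraph V) (v : V) : ℕ :=
  sSup {n | ∃ H : G.Subgraph, v ∈ H.verts ∧ subMinDeg G H = n}

/-- A vertex `u` is cheap if `ζ(u) = deg_G(u)` and `ζ(u) ≤ ζ(w)` for every `w ∈ N[u]`. -/
def Cheap {V : Type*} (G : SimpleGraph V) (u : V) : Prop :=
  zeta G u = (G.neighborSet u).ncard ∧ ∀ w, G.Adj u w → zeta G u ≤ zeta G w

/-!
Always `ζ(v) ≤ deg v`, so the sums agree exactly when `ζ(v) = deg v` for every `v`. For a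
`d`-regular graph the whole graph witnesses `ζ(v) ≥ d`. Conversely, let `u` have maximum degree
`Δ` and let `H ∋ u` realise `ζ(u) = Δ`: every vertex of `H` has at least `Δ` neighbours in `H`,
hence all of its `G`-neighbours lie in `H` and its degree is `Δ`. So `H` is closed under adjacency
and, `G` being connected, contains every vertex.
-/

namespace SimpleGraph

variable {V : Type*} (G : SimpleGraph V)

lemma ncard_neighborSet_eq_degree (v : V) [Fintype (G.neighborSet v)] :
    (G.neighborSet v).ncard = G.degree v := by
  rw [Set.ncard_eq_toFinset_card', ← card_neighborSet_eq_degree, Set.toFinset_card]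

variable {G} in
lemma Reachable.mem_of_adj_closed {S : Set V} (hS : ∀ x ∈ S, ∀ y, G.Adj x y → y ∈ S)
    {u v : V} (huv : G.Reachable u v) (hu : u ∈ S) : v ∈ S := by
  obtain ⟨w⟩ := huv
  induction w with
  | nil => exact hu
  | cons hadj _ ih => exact ih (hS _ hu _ hadj)

lemma Subgraph.neighborSet_eq_of_degree_le {H : G.Subgraph} {x : V} [Fintype (G.neighborSet x)]
    (h : G.degree x ≤ (H.neighborSet x).ncard) : H.neighborSet x = G.neighborSet x :=
  Set.eq_of_subset_of_ncard_le (H.neighborSet_subset x)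
    (G.ncard_neighborSet_eq_degree x ▸ h) (Set.toFinite _)

end SimpleGraph

section DegenerateDegree

variable {V : Type*} (G : SimpleGraph V)

lemma subMinDeg_le {H : G.Subgraph} {v : V} (hv : v ∈ H.verts) :
    subMinDeg G H ≤ (H.neighborSet v).ncard :=
  Nat.sInf_le ⟨v, hv, rfl⟩

lemma le_subMinDeg {H : G.Subgraph} {d : ℕ} (hne : H.verts.Nonempty)
    (h : ∀ v ∈ H.verts, d ≤ (H.neighborSet v).ncard) : d ≤ subMinDeg G H :=
  le_csInf (hne.image _) (by rintro _ ⟨v, hv, rfl⟩; exact h v hv)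

lemma subMinDeg_le_ncard_neighborSet {H : G.Subgraph} {v : V} (hv : v ∈ H.verts)
    (hfin : (G.neighborSet v).Finite) : subMinDeg G H ≤ (G.neighborSet v).ncard :=
  (subMinDeg_le G hv).trans (Set.ncard_le_ncard (H.neighborSet_subset v) hfin)

lemma bddAbove_subMinDeg_of_mem {v : V} (hfin : (G.neighborSet v).Finite) :
    BddAbove {n | ∃ H : G.Subgraph, v ∈ H.verts ∧ subMinDeg G H = n} := by
  refine ⟨(G.neighborSet v).ncard, ?_⟩
  rintro _ ⟨H, hv, rfl⟩
  exact subMinDeg_le_ncard_neighborSet G hv hfin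

lemma subMinDeg_le_zeta {H : G.Subgraph} {v : V} (hv : v ∈ H.verts)
    (hfin : (G.neighborSet v).Finite) : subMinDeg G H ≤ zeta G v :=
  le_csSup (bddAbove_subMinDeg_of_mem G hfin) ⟨H, hv, rfl⟩

lemma exists_subgraph_subMinDeg_eq_zeta {v : V} (hfin : (G.neighborSet v).Finite) :
    ∃ H : G.Subgraph, v ∈ H.verts ∧ subMinDeg G H = zeta G v :=
  Nat.sSup_mem (s := {n | ∃ H : G.Subgraph, v ∈ H.verts ∧ subMinDeg G H = n})
    ⟨_, G.singletonSubgraph v, by simp, rfl⟩ (bddAbove_subMinDeg_of_mem G hfin)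

lemma zeta_le_degree (v : V) [Fintype (G.neighborSet v)] : zeta G v ≤ G.degree v := by
  rw [← G.ncard_neighborSet_eq_degree v]
  refine csSup_le' ?_
  rintro _ ⟨H, hv, rfl⟩
  exact subMinDeg_le_ncard_neighborSet G hv (Set.toFinite _)

variable {G} in
lemma SimpleGraph.IsRegularOfDegree.zeta_eq_degree [G.LocallyFinite] {d : ℕ}
    (hd : G.IsRegularOfDegree d) (v : V) : zeta G v = G.degree v := by
  refine le_antisymm (zeta_le_degree G v) ?_
  have hd_le : d ≤ subMinDeg G ⊤ :=
    le_subMinDeg G ⟨v, trivial⟩ fun x _ => by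
      simp only [Subgraph.neighborSet_top, G.ncard_neighborSet_eq_degree, hd x, le_refl]
  rw [hd v]
  exact hd_le.trans (subMinDeg_le_zeta G (Set.mem_univ v) (Set.toFinite _))

lemma isRegularOfDegree_of_zeta_eq_degree [Fintype V] [DecidableRel G.Adj] (hG : G.Connected)
    (h : ∀ v, zeta G v = G.degree v) : G.IsRegularOfDegree G.maxDegree := by
  have := hG.nonempty
  obtain ⟨u, hu⟩ := G.exists_maximal_degree_vertex
  obtain ⟨H, huH, hH⟩ := exists_subgraph_subMinDeg_eq_zeta G (Set.toFinite (G.neighborSet u))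
  rw [h u, ← hu] at hH
  have hmax_le : ∀ x ∈ H.verts, G.maxDegree ≤ (H.neighborSet x).ncard :=
    fun x hx => hH ▸ subMinDeg_le G hx
  have hfull : ∀ x ∈ H.verts, H.neighborSet x = G.neighborSet x := fun x hx =>
    Subgraph.neighborSet_eq_of_degree_le G ((G.degree_le_maxDegree x).trans (hmax_le x hx))
  have hclosed : ∀ x ∈ H.verts, ∀ y, G.Adj x y → y ∈ H.verts := fun x hx y hxy =>
    H.edge_vert (H.adj_symm (show y ∈ H.neighborSet x from hfull x hx ▸ hxy))
  intro v
  have hv : v ∈ H.verts := (hG u v).mem_of_adj_closed hclosed huH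
  refine le_antisymm (G.degree_le_maxDegree v) ?_
  rw [← G.ncard_neighborSet_eq_degree, ← hfull v hv]
  exact hmax_le v hv

end DegenerateDegree

lemma sum_inv_zeta_eq_sum_inv_degree_iff {V : Type*} [Fintype V] (G : SimpleGraph V)
    [DecidableRel G.Adj] :
    (∑ v : V, (1 : ℝ) / (zeta G v + 1)) = (∑ v : V, (1 : ℝ) / (G.degree v + 1)) ↔
      ∀ v, zeta G v = G.degree v := by
  have hle : ∀ v ∈ univ, (1 : ℝ) / (G.degree v + 1) ≤ 1 / (zeta G v + 1) := fun v _ => by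
    gcongr
    exact_mod_cast zeta_le_degree G v
  rw [eq_comm, sum_eq_sum_iff_of_le hle]
  refine forall_congr' fun v => ?_
  simp only [mem_univ, true_implies, one_div, inv_inj, add_left_inj, Nat.cast_inj, eq_comm]

theorem stmt_7_general {V : Type*} [Fintype V] (G : SimpleGraph V)
    [DecidableRel G.Adj] (hG : G.Connected) :
    (∑ v : V, (1 : ℝ) / (zeta G v + 1)) = (∑ v : V, (1 : ℝ) / (G.degree v + 1)) ↔
      ∃ d, G.IsRegularOfDegree d := by
  rw [sum_inv_zeta_eq_sum_inv_degree_iff]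
  exact ⟨fun h => ⟨_, isRegularOfDegree_of_zeta_eq_degree G hG h⟩,
    fun ⟨_, hd⟩ => hd.zeta_eq_degree⟩

theorem stmt_7 {V : Type*} [Fintype V] [Nonempty V] (G : SimpleGraph V)
    [DecidableRel G.Adj] (hG : G.Connected) :
    (∑ v : V, (1 : ℝ) / (zeta G v + 1)) = (∑ v : V, (1 : ℝ) / (G.degree v + 1)) ↔
      ∃ d, G.IsRegularOfDegree d :=
  stmt_7_general G hG
end

section
/- For every finite simple graph G on n ≥ 1 vertices, α(G) ≥ n/(ζ̄ + 1), where ζ̄ = (Σ_{v} ζ(v))/n is the average degenerate degree. -/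
/-!
Peel off closed neighbourhoods: if every nonempty `A` contains a vertex `u` whose degree inside
`A` is at most `f v` for all `v ∈ A`, then deleting `N[u] ∩ A` costs at most `1` from
`∑ 1 / (f v + 1)` and gains `u` for the independent set, so `α(G) ≥ ∑ 1 / (f v + 1)`.
The degenerate degree qualifies: a vertex of minimum degree in `G[A]` has degree `δ(G[A]) ≤ ζ(v)`
for every `v ∈ A`. The AM–HM inequality then turns `∑ 1 / (ζ(v) + 1)` into `n / (ζ̄ + 1)`.
-/

open SimpleGraph Finset

namespace SimpleGraph

variable {V : Type*} (G : SimpleGraph V)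

theorem exists_isIndepSet_sum_inv_le [DecidableEq V] [DecidableRel G.Adj] (f : V → ℝ)
    (hf : ∀ A : Finset V, A.Nonempty → ∃ u ∈ A, ∀ v ∈ A, (#{w ∈ A | G.Adj u w} : ℝ) ≤ f v)
    (A : Finset V) :
    ∃ s ⊆ A, G.IsIndepSet (s : Set V) ∧ ∑ v ∈ A, 1 / (f v + 1) ≤ #s := by
  induction A using Finset.strongInduction with
  | _ A ih =>
    rcases A.eq_empty_or_nonempty with rfl | hA
    · exact ⟨∅, subset_rfl, by simp, by simp⟩
    obtain ⟨u, huA, hu⟩ := hf A hA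
    set N := {w ∈ A | G.Adj u w}
    set C := insert u N
    have hCA : C ⊆ A := insert_subset huA (filter_subset _ _)
    have hCcard : (#C : ℝ) = #N + 1 := by
      rw [card_insert_of_notMem (by simp [N]), Nat.cast_succ]
    have hC : ∑ v ∈ C, 1 / (f v + 1) ≤ 1 := by
      have hterm : ∀ v ∈ C, 1 / (f v + 1) ≤ 1 / ((#N : ℝ) + 1) := fun v hv =>
        one_div_le_one_div_of_le (by positivity) (by linarith [hu v (hCA hv)])
      calc ∑ v ∈ C, 1 / (f v + 1) ≤ #C • (1 / ((#N : ℝ) + 1)) := sum_le_card_nsmul _ _ _ hterm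
        _ = 1 := by rw [nsmul_eq_mul, hCcard]; field_simp
    obtain ⟨s, hsB, hs, hsum⟩ := ih (A \ C) (sdiff_ssubset hCA ⟨u, mem_insert_self _ _⟩)
    have hus : u ∉ s := fun h => (mem_sdiff.1 (hsB h)).2 (mem_insert_self _ _)
    have hnadj : ∀ w ∈ s, ¬ G.Adj u w := fun w hw hadj =>
      (mem_sdiff.1 (hsB hw)).2 (mem_insert_of_mem (mem_filter.2 ⟨(mem_sdiff.1 (hsB hw)).1, hadj⟩))
    refine ⟨insert u s, insert_subset huA (hsB.trans sdiff_subset), ?_, ?_⟩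
    · rw [coe_insert, isIndepSet_iff, Set.pairwise_insert]
      exact ⟨hs, fun w hw _ => ⟨hnadj w hw, fun h => hnadj w hw h.symm⟩⟩
    · rw [← sum_sdiff hCA, card_insert_of_notMem hus, Nat.cast_succ]
      linarith

theorem subMinDeg_le_ncard_neighborSet (H : G.Subgraph) {v : V} (hv : v ∈ H.verts) :
    subMinDeg G H ≤ (H.neighborSet v).ncard :=
  Nat.sInf_le ⟨v, hv, rfl⟩

theorem subMinDeg_le_zeta [Finite V] (H : G.Subgraph) {v : V} (hv : v ∈ H.verts) :
    subMinDeg G H ≤ zeta G v := by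
  have hbdd : BddAbove {n | ∃ H : G.Subgraph, v ∈ H.verts ∧ subMinDeg G H = n} := by
    refine ⟨Nat.card V, ?_⟩
    rintro _ ⟨H', hv', rfl⟩
    exact (subMinDeg_le_ncard_neighborSet G H' hv').trans (Set.ncard_le_card _)
  exact le_csSup hbdd ⟨H, hv, rfl⟩

theorem ncard_neighborSet_induce_top [DecidableRel G.Adj] (A : Finset V) {v : V} (hv : v ∈ A) :
    (((⊤ : G.Subgraph).induce A).neighborSet v).ncard = #{w ∈ A | G.Adj v w} := by
  rw [← Set.ncard_coe_finset]
  congr 1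
  ext w
  simp [hv]

theorem exists_card_adj_le_zeta [Finite V] [DecidableRel G.Adj] (A : Finset V)
    (hA : A.Nonempty) : ∃ u ∈ A, ∀ v ∈ A, #{w ∈ A | G.Adj u w} ≤ zeta G v := by
  obtain ⟨u, huA, hmin⟩ := A.exists_min_image (fun v => #{w ∈ A | G.Adj v w}) hA
  set H := (⊤ : G.Subgraph).induce (A : Set V)
  have hδ : #{w ∈ A | G.Adj u w} ≤ subMinDeg G H := by
    refine le_csInf ⟨_, u, by simpa [H] using huA, rfl⟩ ?_
    rintro _ ⟨w, hw, rfl⟩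
    have hw : w ∈ A := by simpa [H] using hw
    exact (hmin w hw).trans_eq (ncard_neighborSet_induce_top G A hw).symm
  exact ⟨u, huA, fun v hv => hδ.trans (subMinDeg_le_zeta G H (by simpa [H] using hv))⟩

end SimpleGraph

theorem Finset.card_div_mean_add_one_le_sum_inv {ι : Type*} (s : Finset ι) (hs : s.Nonempty)
    (x : ι → ℝ) (hx : ∀ i ∈ s, 0 ≤ x i) :
    #s / ((∑ i ∈ s, x i) / #s + 1) ≤ ∑ i ∈ s, 1 / (x i + 1) := by
  have hn : (0 : ℝ) < #s := by exact_mod_cast hs.card_pos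
  have htitu := sq_sum_div_le_sum_sq_div s (fun _ => (1 : ℝ)) (g := fun i => x i + 1)
    (fun i hi => by linarith [hx i hi])
  simp only [sum_const, nsmul_eq_mul, mul_one, one_pow, sum_add_distrib] at htitu
  calc (#s : ℝ) / ((∑ i ∈ s, x i) / #s + 1) = #s ^ 2 / (∑ i ∈ s, x i + #s) := by
        field_simp
    _ ≤ _ := htitu

theorem stmt_8 {V : Type*} [Fintype V] [Nonempty V] (G : SimpleGraph V) :
    ∃ s : Finset V, (∀ u ∈ s, ∀ w ∈ s, u ≠ w → ¬ G.Adj u w) ∧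
      (Fintype.card V : ℝ) /
        ((∑ v : V, (zeta G v : ℝ)) / (Fintype.card V) + 1) ≤ s.card := by
  classical
  obtain ⟨s, -, hs, hsum⟩ := G.exists_isIndepSet_sum_inv_le (fun v => zeta G v)
    (fun A hA => by exact_mod_cast G.exists_card_adj_le_zeta A hA) univ
  refine ⟨s, fun u hu w hw huw => hs hu hw huw, le_trans ?_ hsum⟩
  simpa using univ.card_div_mean_add_one_le_sum_inv univ_nonempty (fun v => (zeta G v : ℝ))
    (fun _ _ => Nat.cast_nonneg _)
end
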